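/- arXiv:2301.06036 — 5 statements merged into one kernel-verified Lean document; each statement's English description precedes it below -/
import Mathlib

section
/- Define μ(r,θ) = (r/(D cos θ))·[arctan(D/(2r cos θ) + tan θ) + arctan(D/(2r cos θ) - tan θ)] for r, D > 0 and θ ∈ (-π/2, π/2). Then μ(r, θ) tends to 1 as r → ∞. -/
/-!
The bracket is `g (D / (2 r cos θ))` with `g a = arctan (a + tan θ) + arctan (a - tan θ)`, an odd
function whose derivative at `0` is `2 / (1 + tan² θ) = 2 cos² θ`. Hence `r * g (k / r) → k g'(0)`
as `r → ∞`, and with `k = D / (2 cos θ)` the prefactor `1 / (D cos θ)` brings the limit to `1`.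
-/

open Real Filter Topology

theorem hasDerivAt_arctan_add_add_arctan_sub (t : ℝ) :
    HasDerivAt (fun a => arctan (a + t) + arctan (a - t)) (2 / (1 + t ^ 2)) 0 := by
  refine ((((hasDerivAt_id' 0).add_const t).arctan).add
    (((hasDerivAt_id' 0).sub_const t).arctan)).congr_deriv ?_
  simp only [zero_add, zero_sub, neg_sq]
  ring

theorem tendsto_mul_comp_div_atTop_of_hasDerivAt {f : ℝ → ℝ} {f' k : ℝ}
    (hf : HasDerivAt f f' 0) (hf0 : f 0 = 0) (hk : k ≠ 0) :
    Tendsto (fun r => r * f (k / r)) atTop (𝓝 (k * f')) := by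
  have hslope : Tendsto (fun a => a⁻¹ * f a) (𝓝[≠] 0) (𝓝 f') := by
    simpa [hf0] using hasDerivAt_iff_tendsto_slope_zero.mp hf
  have hk_div : Tendsto (fun r => k / r) atTop (𝓝[≠] 0) :=
    tendsto_nhdsWithin_of_tendsto_nhds_of_eventually_within _
      (tendsto_const_nhds.div_atTop tendsto_id)
      (by filter_upwards [eventually_gt_atTop 0] with r hr using div_ne_zero hk hr.ne')
  refine ((hslope.comp hk_div).const_mul k).congr' ?_
  filter_upwards [eventually_gt_atTop 0] with r hr
  simp only [Function.comp_apply]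
  field_simp

theorem stmt2 (D θ : ℝ) (hD : 0 < D) (hθ : θ ∈ Set.Ioo (-(π/2)) (π/2)) :
    Filter.Tendsto
      (fun r : ℝ => (r/(D*Real.cos θ)) *
        (Real.arctan (D/(2*r*Real.cos θ) + Real.tan θ)
          + Real.arctan (D/(2*r*Real.cos θ) - Real.tan θ)))
      Filter.atTop (nhds 1) := by
  have hc : 0 < cos θ := cos_pos_of_mem_Ioo hθ
  have hlim := (tendsto_mul_comp_div_atTop_of_hasDerivAt
    (hasDerivAt_arctan_add_add_arctan_sub (tan θ)) (by simp [arctan_neg])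
    (div_pos hD (mul_pos two_pos hc)).ne').const_mul (1 / (D * cos θ))
  have hval : 1 / (D * cos θ) * (D / (2 * cos θ) * (2 / (1 + tan θ ^ 2))) = 1 := by
    rw [div_eq_mul_inv 2, inv_one_add_tan_sq hc.ne']
    field_simp
  rw [hval] at hlim
  refine hlim.congr fun r => ?_
  rw [show D / (2 * r * cos θ) = D / (2 * cos θ) / r by ring]
  ring
end

section
/- Let μ(r,θ) = (r/(D cos θ))·[arctan(D/(2r cos θ) + tan θ) + arctan(D/(2r cos θ) - tan θ)]. If 0 ≤ θ < π/6, then μ(r,θ) < 1 for all r > 0. -/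
/-!
Put `a = D / (2 r cos θ)` and `t = tan θ`; since `1 + t² = 1 / cos² θ`, the claim reads
`arctan (a + t) + arctan (a - t) < 2 a / (1 + t²)`. Both sides vanish at `a = 0` and have the
same slope there, and for `a > 0` the right-hand side grows strictly faster exactly when
`3 t² < 1 + a²`, which `θ < π / 6` (i.e. `3 t² < 1`) guarantees.
-/

open Real

lemma one_div_one_add_sq_add_one_div_one_add_sq_lt {a t : ℝ} (ha : a ≠ 0)
    (hat : 3 * t ^ 2 < 1 + a ^ 2) :
    1 / (1 + (a + t) ^ 2) + 1 / (1 + (a - t) ^ 2) < 2 / (1 + t ^ 2) := by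
  have hp : 0 < 1 + (a + t) ^ 2 := by positivity
  have hm : 0 < 1 + (a - t) ^ 2 := by positivity
  rw [div_add_div _ _ hp.ne' hm.ne', div_lt_div_iff₀ (by positivity) (by positivity)]
  -- with `u = 1 + a² + t²` this is `4 a² t² < a² u`
  nlinarith [mul_lt_mul_of_pos_left hat (sq_pos_of_ne_zero ha)]

lemma arctan_add_add_arctan_sub_lt {a t : ℝ} (ht : 3 * t ^ 2 ≤ 1) (ha : 0 < a) :
    arctan (a + t) + arctan (a - t) < 2 * a / (1 + t ^ 2) := by
  set F : ℝ → ℝ := fun x => 2 * x / (1 + t ^ 2) - arctan (x + t) - arctan (x - t) with hF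
  have hderiv (x : ℝ) :
      HasDerivAt F (2 / (1 + t ^ 2) - 1 / (1 + (x + t) ^ 2) - 1 / (1 + (x - t) ^ 2)) x := by
    have hlin := ((hasDerivAt_id x).const_mul 2).div_const (1 + t ^ 2)
    have hp := ((hasDerivAt_id x).add_const t).arctan
    have hm := ((hasDerivAt_id x).sub_const t).arctan
    exact ((hlin.fun_sub hp).fun_sub hm).congr_deriv (by simp)
  have hmono : StrictMonoOn F (Set.Ici 0) := by
    refine strictMonoOn_of_deriv_pos (convex_Ici 0)
      (fun x _ => (hderiv x).continuousAt.continuousWithinAt) fun x hx => ?_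
    rw [interior_Ici, Set.mem_Ioi] at hx
    rw [(hderiv x).deriv, sub_sub, sub_pos]
    exact one_div_one_add_sq_add_one_div_one_add_sq_lt hx.ne' (by nlinarith)
  have hF0 : F 0 = 0 := by simp [hF, arctan_neg]
  have hF0a := hmono Set.self_mem_Ici (Set.mem_Ici.mpr ha.le) ha
  rw [hF0, hF] at hF0a
  linarith

lemma three_mul_tan_sq_lt_one {θ : ℝ} (h₁ : -(π / 6) < θ) (h₂ : θ < π / 6) :
    3 * tan θ ^ 2 < 1 := by
  have hmem : ∀ x, -(π / 6) ≤ x → x ≤ π / 6 → x ∈ Set.Ioo (-(π / 2)) (π / 2) :=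
    fun _ h h' => ⟨by linarith [pi_pos], by linarith [pi_pos]⟩
  have hlt := strictMonoOn_tan (hmem _ h₁.le h₂.le) (hmem _ (by linarith) le_rfl) h₂
  have hgt := strictMonoOn_tan (hmem _ le_rfl (by linarith)) (hmem _ h₁.le h₂.le) h₁
  rw [tan_neg, tan_pi_div_six] at hgt
  rw [tan_pi_div_six] at hlt
  have := sq_lt_sq' hgt hlt
  rw [div_pow, sq_sqrt zero_le_three] at this
  linarith

theorem stmt4 (D θ : ℝ) (hD : 0 < D) (hθ0 : 0 ≤ θ) (hθ1 : θ < π/6) :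
    ∀ r : ℝ, 0 < r →
      (r/(D*Real.cos θ)) *
        (Real.arctan (D/(2*r*Real.cos θ) + Real.tan θ)
          + Real.arctan (D/(2*r*Real.cos θ) - Real.tan θ)) < 1 := by
  intro r hr
  have hcos : 0 < cos θ := cos_pos_of_mem_Ioo ⟨by linarith [pi_pos], by linarith [pi_pos]⟩
  have hkey := arctan_add_add_arctan_sub_lt (three_mul_tan_sq_lt_one (by linarith [pi_pos]) hθ1).le
    (by positivity : 0 < D / (2 * r * cos θ))
  calc r / (D * cos θ) * (arctan (D / (2 * r * cos θ) + tan θ)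
        + arctan (D / (2 * r * cos θ) - tan θ))
      < r / (D * cos θ) * (2 * (D / (2 * r * cos θ)) / (1 + tan θ ^ 2)) := by gcongr
    _ = 1 := by
      rw [div_eq_mul_inv _ (1 + _), inv_one_add_tan_sq hcos.ne']
      field_simp
end

section
/- Let μ(r,θ) = (r/(D cos θ))·[arctan(D/(2r cos θ) + tan θ) + arctan(D/(2r cos θ) - tan θ)] for D > 0, r > 0, θ ∈ (-π/2, π/2). The second partial derivative of μ with respect to r equals 8D²·f₁(r,θ)/f₂(r,θ), where f₁(r,θ) = 16cos⁴θ(tan²θ+1)(3tan²θ-1)r⁴ - 8D²cos²θ(tan²θ+1)r² - D⁴, and f₂(r,θ) = [(4cos²θ tan²θ + 4cos²θ)r² - 4D cosθ tanθ r + D²]²·[(4cos²θ tan²θ + 4cos²θ)r² + 4D cosθ tanθ r + D²]². -/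
/-! Write `c = cos θ`, `t = tan θ` and `Q± s = (2cs)² + (2cts ± D)²`. Since
`d/ds arctan (D/(2sc) ± t) = -2Dc / Q± s`, the first derivative is `μ' = μ/s - 2s/Q₊ - 2s/Q₋`.
Differentiating `μ/s` with the quotient rule and substituting `μ'` again gives
`(μ/s)' = -2/Q₊ - 2/Q₋`: the arctangents drop out, so `μ''` is a rational function of `s`, and
over the common denominator `Q₊² Q₋²` it is the stated one. -/

open Real Filter Topology

/-- `μ(r, θ)` is `receivedPower D (cos θ) (tan θ) r`. -/
noncomputable def receivedPower (D c t s : ℝ) : ℝ :=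
  s / (D * c) * (arctan (D / (2 * s * c) + t) + arctan (D / (2 * s * c) - t))

/-- `(2sc)² (1 + (D/(2sc) + t)²)`, the denominator in the derivative of `arctan (D/(2sc) + t)`. -/
def arctanDenom (D c t s : ℝ) : ℝ :=
  (4 * c ^ 2 * t ^ 2 + 4 * c ^ 2) * s ^ 2 + 4 * D * c * t * s + D ^ 2

section

variable {D c t s : ℝ}

theorem arctanDenom_eq_sq_add_sq :
    arctanDenom D c t s = (2 * c * s) ^ 2 + (2 * c * t * s + D) ^ 2 := by
  unfold arctanDenom; ring

theorem arctanDenom_pos (hc : c ≠ 0) (hs : s ≠ 0) : 0 < arctanDenom D c t s := by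
  rw [arctanDenom_eq_sq_add_sq]
  positivity

theorem arctanDenom_neg :
    arctanDenom D c (-t) s = (4 * c ^ 2 * t ^ 2 + 4 * c ^ 2) * s ^ 2 - 4 * D * c * t * s + D ^ 2 := by
  unfold arctanDenom; ring

theorem one_add_sq_div_add_eq (hc : c ≠ 0) (hs : s ≠ 0) :
    1 + (D / (2 * s * c) + t) ^ 2 = arctanDenom D c t s / (2 * s * c) ^ 2 := by
  unfold arctanDenom
  field_simp
  ring

theorem hasDerivAt_div_quadratic {a b d x : ℝ} (hx : a * x ^ 2 + b * x + d ≠ 0) :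
    HasDerivAt (fun x => x / (a * x ^ 2 + b * x + d))
      ((d - a * x ^ 2) / (a * x ^ 2 + b * x + d) ^ 2) x := by
  have hq : HasDerivAt (fun x => a * x ^ 2 + b * x + d) (a * (2 * x) + b) x := by
    simpa using
      (((hasDerivAt_pow 2 x).const_mul a).add ((hasDerivAt_id x).const_mul b)).add_const d
  refine ((hasDerivAt_id' x).div hq hx).congr_deriv ?_
  ring

theorem hasDerivAt_arctan_div_add (hc : c ≠ 0) (hs : s ≠ 0) :
    HasDerivAt (fun s => arctan (D / (2 * s * c) + t))
      (-(2 * D * c) / arctanDenom D c t s) s := by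
  have hinv : HasDerivAt (fun s => D / (2 * s * c)) (-(2 * D * c) / (2 * s * c) ^ 2) s := by
    refine ((hasDerivAt_const s D).div (((hasDerivAt_id' s).const_mul 2).mul_const c)
      (by simp [hs, hc])).congr_deriv ?_
    ring
  convert (hinv.add_const t).arctan using 1
  rw [one_add_sq_div_add_eq hc hs]
  have := arctanDenom_pos (D := D) (t := t) hc hs
  field_simp

theorem hasDerivAt_arctan_div_sub (hc : c ≠ 0) (hs : s ≠ 0) :
    HasDerivAt (fun s => arctan (D / (2 * s * c) - t))
      (-(2 * D * c) / arctanDenom D c (-t) s) s := by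
  simpa only [← sub_eq_add_neg] using hasDerivAt_arctan_div_add (t := -t) hc hs

theorem hasDerivAt_receivedPower (hD : D ≠ 0) (hc : c ≠ 0) (hs : s ≠ 0) :
    HasDerivAt (receivedPower D c t)
      (receivedPower D c t s / s - 2 * (s / arctanDenom D c t s)
        - 2 * (s / arctanDenom D c (-t) s)) s := by
  have hlin : HasDerivAt (fun s => s / (D * c)) (1 / (D * c)) s := by
    simpa using (hasDerivAt_id s).div_const (D * c)
  refine (hlin.mul ((hasDerivAt_arctan_div_add hc hs).add
    (hasDerivAt_arctan_div_sub hc hs))).congr_deriv ?_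
  have := arctanDenom_pos (D := D) (t := t) hc hs
  have := arctanDenom_pos (D := D) (t := -t) hc hs
  simp only [receivedPower, Pi.add_apply]
  field_simp
  ring

theorem deriv_receivedPower_eventuallyEq (hD : D ≠ 0) (hc : c ≠ 0) (hs : s ≠ 0) :
    deriv (receivedPower D c t) =ᶠ[𝓝 s] fun x =>
      receivedPower D c t x / x - 2 * (x / arctanDenom D c t x)
        - 2 * (x / arctanDenom D c (-t) x) := by
  filter_upwards [isOpen_ne.mem_nhds hs] with x hx
  exact (hasDerivAt_receivedPower hD hc hx).deriv

theorem hasDerivAt_deriv_receivedPower (hD : D ≠ 0) (hc : c ≠ 0) (hs : s ≠ 0) :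
    HasDerivAt (deriv (receivedPower D c t))
      (8 * D ^ 2 * (16 * c ^ 4 * (t ^ 2 + 1) * (3 * t ^ 2 - 1) * s ^ 4
          - 8 * D ^ 2 * c ^ 2 * (t ^ 2 + 1) * s ^ 2 - D ^ 4)
        / (arctanDenom D c (-t) s ^ 2 * arctanDenom D c t s ^ 2)) s := by
  have hQp := (arctanDenom_pos (D := D) (t := t) hc hs).ne'
  have hQm := (arctanDenom_pos (D := D) (t := -t) hc hs).ne'
  have hquot := (hasDerivAt_receivedPower (t := t) hD hc hs).div (hasDerivAt_id' s) hs
  have hp : HasDerivAt (fun x => x / arctanDenom D c t x)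
      ((D ^ 2 - (4 * c ^ 2 * t ^ 2 + 4 * c ^ 2) * s ^ 2) / arctanDenom D c t s ^ 2) s :=
    hasDerivAt_div_quadratic hQp
  have hm : HasDerivAt (fun x => x / arctanDenom D c (-t) x)
      ((D ^ 2 - (4 * c ^ 2 * (-t) ^ 2 + 4 * c ^ 2) * s ^ 2) / arctanDenom D c (-t) s ^ 2) s :=
    hasDerivAt_div_quadratic hQm
  refine (((hquot.sub (hp.const_mul 2)).sub (hm.const_mul 2)).congr_of_eventuallyEq
    (deriv_receivedPower_eventuallyEq hD hc hs)).congr_deriv ?_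
  have hP : arctanDenom D c t s
      = (4 * c ^ 2 * t ^ 2 + 4 * c ^ 2) * s ^ 2 + 4 * D * c * t * s + D ^ 2 := rfl
  have hM := arctanDenom_neg (D := D) (c := c) (t := t) (s := s)
  -- with `Q±` opaque, `field_simp` clears them as denominators instead of expanding them
  generalize arctanDenom D c t s = P at hQp hP ⊢
  generalize arctanDenom D c (-t) s = M at hQm hM ⊢
  field_simp
  rw [hP, hM]
  ring

end

theorem stmt5 (D θ : ℝ) (hD : 0 < D) (hθ : θ ∈ Set.Ioo (-(π/2)) (π/2))
    (r : ℝ) (hr : 0 < r) :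
    deriv (deriv (fun s : ℝ => (s/(D*Real.cos θ)) *
        (Real.arctan (D/(2*s*Real.cos θ) + Real.tan θ)
          + Real.arctan (D/(2*s*Real.cos θ) - Real.tan θ)))) r
    = 8*D^2 *
        (16*(Real.cos θ)^4*((Real.tan θ)^2+1)*(3*(Real.tan θ)^2-1)*r^4
          - 8*D^2*(Real.cos θ)^2*((Real.tan θ)^2+1)*r^2 - D^4)
      / (((4*(Real.cos θ)^2*(Real.tan θ)^2 + 4*(Real.cos θ)^2)*r^2
            - 4*D*(Real.cos θ)*(Real.tan θ)*r + D^2)^2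
        * ((4*(Real.cos θ)^2*(Real.tan θ)^2 + 4*(Real.cos θ)^2)*r^2
            + 4*D*(Real.cos θ)*(Real.tan θ)*r + D^2)^2) := by
  have hc : cos θ ≠ 0 := (cos_pos_of_mem_Ioo hθ).ne'
  have h := (hasDerivAt_deriv_receivedPower (t := tan θ) hD.ne' hc hr.ne').deriv
  rw [arctanDenom_neg] at h
  exact h
end

section
/- For D_y, D_z, r > 0, the double integral r²·∫₀^{1/√π} ∫_{-π}^{π} ρ/((D_y² cos²φ + D_z² sin²φ)ρ² + r²) dφ dρ equals (2πr²/(D_y D_z))·ln[ (D_z·√(D_y²/(πr²)+1) + D_y·√(D_z²/(πr²)+1)) / (D_y + D_z) ]. -/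
/-!
For fixed `ρ` the integrand is `ρ / (A cos² φ + B sin² φ)` with `A = D_y² ρ² + r²` and
`B = D_z² ρ² + r²`, whose integral over a full period is `2π ρ / √(A B)`. The remaining radial
integrand `2π ρ / √((D_y² ρ² + r²)(D_z² ρ² + r²))` is an exact derivative of
`(2π / (D_y D_z)) log (D_z √(D_y² ρ² + r²) + D_y √(D_z² ρ² + r²))`.
-/

open Real

lemma mul_cos_sq_add_mul_sin_sq_pos {a b : ℝ} (ha : 0 < a) (hb : 0 < b) (x : ℝ) :
    0 < a * cos x ^ 2 + b * sin x ^ 2 :=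
  calc (0 : ℝ) < min a b := lt_min ha hb
    _ = min a b * cos x ^ 2 + min a b * sin x ^ 2 := by
      rw [← mul_add, cos_sq_add_sin_sq, mul_one]
    _ ≤ a * cos x ^ 2 + b * sin x ^ 2 := by
      gcongr
      exacts [min_le_left a b, min_le_right a b]

/-- The naive antiderivative `arctan ((v / u) tan x) / (u v)` jumps at `x = ±π/2`; subtracting
`x` and applying the tangent subtraction formula gives this continuous one. -/
lemma hasDerivAt_inv_mul_cos_sq_add_mul_sin_sq_antideriv {u v : ℝ} (hu : 0 < u) (hv : 0 < v)
    (x : ℝ) :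
    HasDerivAt
      (fun x => (x + arctan ((v - u) * (sin x * cos x) / (u * cos x ^ 2 + v * sin x ^ 2))) /
        (u * v))
      (1 / (u ^ 2 * cos x ^ 2 + v ^ 2 * sin x ^ 2)) x := by
  have hden : u * cos x ^ 2 + v * sin x ^ 2 ≠ 0 := (mul_cos_sq_add_mul_sin_sq_pos hu hv x).ne'
  have hden2 : u ^ 2 * cos x ^ 2 + v ^ 2 * sin x ^ 2 ≠ 0 :=
    (mul_cos_sq_add_mul_sin_sq_pos (pow_pos hu 2) (pow_pos hv 2) x).ne'
  have hnum : HasDerivAt (fun x => (v - u) * (sin x * cos x))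
      ((v - u) * (cos x * cos x + sin x * -sin x)) x :=
    ((hasDerivAt_sin x).mul (hasDerivAt_cos x)).const_mul (v - u)
  have hcos2 : HasDerivAt (fun x => cos x ^ 2) (2 * cos x * -sin x) x := by
    simpa using (hasDerivAt_cos x).fun_pow 2
  have hsin2 : HasDerivAt (fun x => sin x ^ 2) (2 * sin x * cos x) x := by
    simpa using (hasDerivAt_sin x).fun_pow 2
  refine (((hasDerivAt_id x).add
    ((hnum.div ((hcos2.const_mul u).add (hsin2.const_mul v)) hden).arctan)).div_const
      (u * v)).congr_deriv ?_
  simp only [Pi.div_apply, Pi.add_apply]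
  field_simp
  rw [cos_sq']
  ring

lemma integral_inv_mul_cos_sq_add_mul_sin_sq {a b : ℝ} (ha : 0 < a) (hb : 0 < b) :
    ∫ x in (-π)..π, 1 / (a * cos x ^ 2 + b * sin x ^ 2) = 2 * π / √(a * b) := by
  have hu := sqrt_pos.2 ha
  have hv := sqrt_pos.2 hb
  have hcont : Continuous fun x => 1 / (a * cos x ^ 2 + b * sin x ^ 2) :=
    continuous_const.div (by fun_prop) fun x => (mul_cos_sq_add_mul_sin_sq_pos ha hb x).ne'
  rw [intervalIntegral.integral_eq_sub_of_hasDerivAt (fun x _ => by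
      simpa only [sq_sqrt ha.le, sq_sqrt hb.le] using
        hasDerivAt_inv_mul_cos_sq_add_mul_sin_sq_antideriv hu hv x)
    (hcont.intervalIntegrable _ _)]
  simp [sqrt_mul ha.le]
  ring

lemma integral_div_mul_cos_sq_add_mul_sin_sq_mul_sq_add {a b c : ℝ} (ha : 0 ≤ a) (hb : 0 ≤ b)
    (hc : 0 < c) (ρ : ℝ) :
    ∫ φ in (-π)..π, ρ / ((a * cos φ ^ 2 + b * sin φ ^ 2) * ρ ^ 2 + c)
      = 2 * π * ρ / √((a * ρ ^ 2 + c) * (b * ρ ^ 2 + c)) := by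
  have hA : 0 < a * ρ ^ 2 + c := by positivity
  have hB : 0 < b * ρ ^ 2 + c := by positivity
  have hintegrand : ∀ φ, ρ / ((a * cos φ ^ 2 + b * sin φ ^ 2) * ρ ^ 2 + c)
      = ρ * (1 / ((a * ρ ^ 2 + c) * cos φ ^ 2 + (b * ρ ^ 2 + c) * sin φ ^ 2)) := fun φ => by
    rw [mul_one_div]
    congr 1
    linear_combination (-c) * sin_sq_add_cos_sq φ
  simp only [hintegrand, intervalIntegral.integral_const_mul,
    integral_inv_mul_cos_sq_add_mul_sin_sq hA hB]
  ring

lemma hasDerivAt_log_mul_sqrt_add_mul_sqrt {a b c : ℝ} (ha : 0 < a) (hb : 0 < b) (hc : 0 < c)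
    (ρ : ℝ) :
    HasDerivAt (fun ρ => log (b * √(a ^ 2 * ρ ^ 2 + c) + a * √(b ^ 2 * ρ ^ 2 + c)))
      (a * b * ρ / √((a ^ 2 * ρ ^ 2 + c) * (b ^ 2 * ρ ^ 2 + c))) ρ := by
  have hA : 0 < a ^ 2 * ρ ^ 2 + c := by positivity
  have hB : 0 < b ^ 2 * ρ ^ 2 + c := by positivity
  have hsum : 0 < b * √(a ^ 2 * ρ ^ 2 + c) + a * √(b ^ 2 * ρ ^ 2 + c) := by positivity
  have hA' : HasDerivAt (fun x => a ^ 2 * x ^ 2 + c) (a ^ 2 * (2 * ρ)) ρ := by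
    simpa using ((hasDerivAt_pow 2 ρ).const_mul (a ^ 2)).add_const c
  have hB' : HasDerivAt (fun x => b ^ 2 * x ^ 2 + c) (b ^ 2 * (2 * ρ)) ρ := by
    simpa using ((hasDerivAt_pow 2 ρ).const_mul (b ^ 2)).add_const c
  refine ((((hA'.sqrt hA.ne').const_mul b).add ((hB'.sqrt hB.ne').const_mul a)).log
    hsum.ne').congr_deriv ?_
  simp only [Pi.add_apply]
  rw [sqrt_mul hA.le]
  field_simp
  ring

lemma integral_mul_div_sqrt_mul_sq_add {a b c : ℝ} (ha : 0 < a) (hb : 0 < b) (hc : 0 < c)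
    (X : ℝ) :
    ∫ ρ in (0 : ℝ)..X, a * b * ρ / √((a ^ 2 * ρ ^ 2 + c) * (b ^ 2 * ρ ^ 2 + c))
      = log ((b * √(a ^ 2 * X ^ 2 + c) + a * √(b ^ 2 * X ^ 2 + c)) / ((a + b) * √c)) := by
  have hcont : Continuous fun ρ => a * b * ρ / √((a ^ 2 * ρ ^ 2 + c) * (b ^ 2 * ρ ^ 2 + c)) :=
    (by fun_prop : Continuous fun ρ : ℝ => a * b * ρ).div (by fun_prop)
      fun ρ => (sqrt_pos.2 (by positivity)).ne'
  rw [intervalIntegral.integral_eq_sub_of_hasDerivAt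
    (fun ρ _ => hasDerivAt_log_mul_sqrt_add_mul_sqrt ha hb hc ρ) (hcont.intervalIntegrable _ _),
    log_div (by positivity) (by positivity)]
  norm_num
  ring_nf

lemma sqrt_add_sq_eq_mul_sqrt {r : ℝ} (hr : 0 < r) (x : ℝ) :
    √(x + r ^ 2) = r * √(x / r ^ 2 + 1) := by
  rw [← sqrt_sq hr.le, ← sqrt_mul (sq_nonneg r), sqrt_sq hr.le]
  congr 1
  field_simp

theorem stmt9 (Dy Dz r : ℝ) (hDy : 0 < Dy) (hDz : 0 < Dz) (hr : 0 < r) :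
    r^2 * ∫ ρ in (0:ℝ)..(1/Real.sqrt π), ∫ φ in (-π)..π,
        ρ / ((Dy^2*(Real.cos φ)^2 + Dz^2*(Real.sin φ)^2)*ρ^2 + r^2)
    = (2*π*r^2/(Dy*Dz)) *
        Real.log ((Dz*Real.sqrt (Dy^2/(π*r^2)+1) + Dy*Real.sqrt (Dz^2/(π*r^2)+1))
          / (Dy + Dz)) := by
  have hradial : ∀ ρ : ℝ, 2 * π * ρ / √((Dy ^ 2 * ρ ^ 2 + r ^ 2) * (Dz ^ 2 * ρ ^ 2 + r ^ 2))
      = 2 * π / (Dy * Dz) *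
        (Dy * Dz * ρ / √((Dy ^ 2 * ρ ^ 2 + r ^ 2) * (Dz ^ 2 * ρ ^ 2 + r ^ 2))) := fun ρ => by
    field_simp
  have hendpoint : ∀ D : ℝ, √(D ^ 2 * (1 / √π) ^ 2 + r ^ 2) = r * √(D ^ 2 / (π * r ^ 2) + 1) := by
    intro D
    rw [sqrt_add_sq_eq_mul_sqrt hr, div_pow, sq_sqrt pi_pos.le]
    field_simp
  simp only [integral_div_mul_cos_sq_add_mul_sin_sq_mul_sq_add (sq_nonneg Dy) (sq_nonneg Dz)
    (pow_pos hr 2), hradial, intervalIntegral.integral_const_mul,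
    integral_mul_div_sqrt_mul_sq_add hDy hDz (pow_pos hr 2), hendpoint, sqrt_sq hr.le]
  have harg : ∀ p q : ℝ, (Dz * (r * p) + Dy * (r * q)) / ((Dy + Dz) * r)
      = (Dz * p + Dy * q) / (Dy + Dz) := fun p q => by
    field_simp
  rw [harg]
  ring
end

section
/- For r, D > 0 and β ∈ (0,1), the integral 2πr²·∫₀^{1/√π} ρ/√(D⁴ρ⁴ + (4β-2)r²D²ρ² + r⁴) dρ equals (πr²/(2D²))·{ ln[ (2D²√(D⁴/π² + (4β-2)r²D²/π + r⁴) + (2D⁴/π + (4β-2)r²D²)) / (2D²√(D⁴/π² + (4β-2)r²D²/π + r⁴) - (2D⁴/π + (4β-2)r²D²)) ] + ln[(1-β)/β] }. -/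
/-!
With `u = ρ²` the integrand becomes `du / (2 √Q(u))` for the quadratic `Q(u) = s²u² + bu + c` of
negative discriminant, whose primitive is `log (2s√Q + Q') / s`. Since
`(2s√Q + Q') (2s√Q - Q') = 4s²c - b²` is constant, this primitive equals
`log ((2s√Q + Q') / (2s√Q - Q')) / (2s)` up to a constant, which is the shape of the closed form;
for the array, the ratio at `ρ = 0` is `β / (1 - β)`.
-/
open Real

section SqrtQuadratic

variable {s b c : ℝ}

theorem ne_zero_of_sq_lt_four_mul_sq_mul (hdisc : b^2 < 4*s^2*c) : s ≠ 0 := by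
  rintro rfl
  nlinarith [sq_nonneg b]

theorem quadratic_pos_of_sq_lt (hdisc : b^2 < 4*s^2*c) (u : ℝ) : 0 < s^2*u^2 + b*u + c := by
  have : 0 < s^2 := by have := ne_zero_of_sq_lt_four_mul_sq_mul hdisc; positivity
  nlinarith [sq_nonneg (2*s^2*u + b)]

theorem two_mul_sqrt_quadratic_add_mul_sub (hdisc : b^2 < 4*s^2*c) (u : ℝ) :
    (2*s*√(s^2*u^2 + b*u + c) + (2*s^2*u + b)) * (2*s*√(s^2*u^2 + b*u + c) - (2*s^2*u + b))
      = 4*s^2*c - b^2 := by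
  have hQ := sq_sqrt (quadratic_pos_of_sq_lt hdisc u).le
  linear_combination (4*s^2) * hQ

theorem two_mul_sqrt_quadratic_add_ne_zero (hdisc : b^2 < 4*s^2*c) (u : ℝ) :
    2*s*√(s^2*u^2 + b*u + c) + (2*s^2*u + b) ≠ 0 := by
  intro h
  have := two_mul_sqrt_quadratic_add_mul_sub hdisc u
  rw [h, zero_mul] at this
  linarith

theorem hasDerivAt_log_two_mul_sqrt_quadratic_add (hdisc : b^2 < 4*s^2*c) (u : ℝ) :
    HasDerivAt (fun u => log (2*s*√(s^2*u^2 + b*u + c) + (2*s^2*u + b)))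
      (s / √(s^2*u^2 + b*u + c)) u := by
  have hQ := quadratic_pos_of_sq_lt hdisc u
  have hQ' : HasDerivAt (fun u => s^2*u^2 + b*u + c) (2*s^2*u + b) u := by
    refine ((((hasDerivAt_pow 2 u).const_mul (s^2)).add
      ((hasDerivAt_id u).const_mul b)).add_const c).congr_deriv ?_
    simp only [Nat.cast_ofNat]; ring
  have hA := ((hQ'.sqrt hQ.ne').const_mul (2*s)).add
    (((hasDerivAt_id u).const_mul (2*s^2)).add_const b)
  have hA0 := two_mul_sqrt_quadratic_add_ne_zero hdisc u
  refine (hA.log hA0).congr_deriv ?_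
  have hS := (sqrt_pos.2 hQ).ne'
  simp only [Pi.add_apply, id_eq]
  generalize √(s^2*u^2 + b*u + c) = S at hS hA0 ⊢
  field_simp
  ring

theorem log_two_mul_sqrt_quadratic_add (hdisc : b^2 < 4*s^2*c) (u : ℝ) :
    log (2*s*√(s^2*u^2 + b*u + c) + (2*s^2*u + b))
      = (log ((2*s*√(s^2*u^2 + b*u + c) + (2*s^2*u + b))
          / (2*s*√(s^2*u^2 + b*u + c) - (2*s^2*u + b))) + log (4*s^2*c - b^2)) / 2 := by
  have hprod := two_mul_sqrt_quadratic_add_mul_sub hdisc u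
  have hA := two_mul_sqrt_quadratic_add_ne_zero hdisc u
  have hB : 2*s*√(s^2*u^2 + b*u + c) - (2*s^2*u + b) ≠ 0 := by
    intro h; rw [h, mul_zero] at hprod; linarith
  rw [← hprod, log_div hA hB, log_mul hA hB]
  ring

theorem hasDerivAt_log_two_mul_sqrt_quartic_add (hdisc : b^2 < 4*s^2*c) (ρ : ℝ) :
    HasDerivAt (fun ρ => log (2*s*√(s^2*(ρ^2)^2 + b*ρ^2 + c) + (2*s^2*ρ^2 + b)) / (2*s))
      (ρ / √(s^2*ρ^4 + b*ρ^2 + c)) ρ := by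
  have hs := ne_zero_of_sq_lt_four_mul_sq_mul hdisc
  have hS := (sqrt_pos.2 (quadratic_pos_of_sq_lt hdisc (ρ^2))).ne'
  refine (((hasDerivAt_log_two_mul_sqrt_quadratic_add hdisc (ρ^2)).comp ρ
    (hasDerivAt_pow 2 ρ)).div_const (2*s)).congr_deriv ?_
  rw [show (ρ^2)^2 = ρ^4 by ring] at hS ⊢
  field_simp
  ring

theorem integral_div_sqrt_quartic (hdisc : b^2 < 4*s^2*c) (t : ℝ) :
    ∫ ρ in (0:ℝ)..t, ρ / √(s^2*ρ^4 + b*ρ^2 + c)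
      = (log ((2*s*√(s^2*(t^2)^2 + b*t^2 + c) + (2*s^2*t^2 + b))
            / (2*s*√(s^2*(t^2)^2 + b*t^2 + c) - (2*s^2*t^2 + b)))
          - log ((2*s*√c + b) / (2*s*√c - b))) / (4*s) := by
  have hcont : Continuous fun ρ : ℝ => ρ / √(s^2*ρ^4 + b*ρ^2 + c) := by
    refine continuous_id.div (by fun_prop) fun ρ => (sqrt_pos.2 ?_).ne'
    exact (quadratic_pos_of_sq_lt hdisc (ρ^2)).trans_eq (by ring)
  rw [intervalIntegral.integral_eq_sub_of_hasDerivAt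
    (fun ρ _ => hasDerivAt_log_two_mul_sqrt_quartic_add hdisc ρ) (hcont.intervalIntegrable _ _),
    log_two_mul_sqrt_quadratic_add hdisc, log_two_mul_sqrt_quadratic_add hdisc]
  simp only [ne_eq, OfNat.ofNat_ne_zero, not_false_eq_true, zero_pow, mul_zero, add_zero, zero_add]
  have hs := ne_zero_of_sq_lt_four_mul_sq_mul hdisc
  field_simp
  ring

end SqrtQuadratic

theorem stmt11 (D r β : ℝ) (hD : 0 < D) (hr : 0 < r) (hβ : β ∈ Set.Ioo (0:ℝ) 1) :
    2*π*r^2 * ∫ ρ in (0:ℝ)..(1/Real.sqrt π),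
        ρ / Real.sqrt (D^4*ρ^4 + (4*β-2)*r^2*D^2*ρ^2 + r^4)
    = (π*r^2/(2*D^2)) *
        (Real.log ((2*D^2*Real.sqrt (D^4/π^2 + (4*β-2)*r^2*D^2/π + r^4)
              + (2*D^4/π + (4*β-2)*r^2*D^2))
            / (2*D^2*Real.sqrt (D^4/π^2 + (4*β-2)*r^2*D^2/π + r^4)
              - (2*D^4/π + (4*β-2)*r^2*D^2)))
          + Real.log ((1-β)/β)) := by
  obtain ⟨hβ0, hβ1⟩ := hβ
  set b := (4*β-2)*r^2*D^2 with hb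
  have hdisc : b^2 < 4*(D^2)^2*r^4 := by
    have : 0 < β*(1-β)*r^4*D^4 := by have := sub_pos.2 hβ1; positivity
    linear_combination 16*this
  have hinv : (1/√π)^2 = π⁻¹ := by rw [div_pow, one_pow, sq_sqrt pi_pos.le, one_div]
  have hQ : (D^2)^2*((1/√π)^2)^2 + b*(1/√π)^2 + r^4 = D^4/π^2 + b/π + r^4 := by
    rw [hinv]; ring
  have hL : 2*(D^2)^2*(1/√π)^2 + b = 2*D^4/π + b := by rw [hinv]; ring
  have h0 : log ((2*D^2*√(r^4) + b) / (2*D^2*√(r^4) - b)) = -log ((1-β)/β) := by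
    have hr2 : √(r^4) = r^2 := by rw [show r^4 = (r^2)^2 by ring, sqrt_sq (sq_nonneg r)]
    rw [hr2, hb, show 2*D^2*r^2 + (4*β-2)*r^2*D^2 = β * (4*r^2*D^2) by ring,
      show 2*D^2*r^2 - (4*β-2)*r^2*D^2 = (1-β) * (4*r^2*D^2) by ring,
      mul_div_mul_right _ _ (by positivity), ← log_inv, inv_div]
  have key := integral_div_sqrt_quartic hdisc (1/√π)
  rw [hQ, hL, h0, show (D^2)^2 = D^4 by ring] at key
  rw [key]
  field_simp
  ring
end
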